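/- On Z₁ := ℝⁿ × ℝⁿ × ℝ₊ declare (x₁, ẋ₁, s₁) and (x₂, ẋ₂, s₂) composable iff x₂ = s₁·x₁ − (2/(1+‖x₁‖²))·ẋ₁, and in that case define their product m̃((x₁, ẋ₁, s₁), (x₂, ẋ₂, s₂)) := (x₁, s₂·ẋ₁ + ((1+‖x₁‖²)/(1+‖x₂‖²))·ẋ₂, s₁·s₂). Then composition is associative: if (x₁, ẋ₁, s₁), (x₂, ẋ₂, s₂) are composable and (x₂, ẋ₂, s₂), (x₃, ẋ₃, s₃) are composable, then m̃((x₁,ẋ₁,s₁),(x₂,ẋ₂,s₂)) is composable with (x₃,ẋ₃,s₃), (x₁,ẋ₁,s₁) is composable with m̃((x₂,ẋ₂,s₂),(x₃,ẋ₃,s₃)), and m̃(m̃((x₁,ẋ₁,s₁),(x₂,ẋ₂,s₂)),(x₃,ẋ₃,s₃)) = m̃((x₁,ẋ₁,s₁), m̃((x₂,ẋ₂,s₂),(x₃,ẋ₃,s₃))). -/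

import Mathlib

/-!
With `rightBase (x, ẋ, s) = s·x − (2/(1+‖x‖²))·ẋ`, the base point of the right projection `ẽ_R`,
`z₁` and `z₂` are composable iff `z₂` sits over `rightBase z₁`, and for composable pairs
`rightBase (z₁ z₂) = rightBase z₂`; this gives both composabilities. The multiplication formula
is associative for all triples, since the weights `(1+‖x₁‖²)/(1+‖x₂‖²)` telescope.
-/

/-- Composability in the groupoid `Z₁ = ℝⁿ × ℝⁿ × ℝ₊` of formula (27):
`(x₁, ẋ₁, s₁)` and `(x₂, ẋ₂, s₂)` are composable iff `x₂ = s₁·x₁ − (2/(1+‖x₁‖²))·ẋ₁`. -/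
noncomputable def Zcomp {n : ℕ}
    (z₁ z₂ : EuclideanSpace ℝ (Fin n) × EuclideanSpace ℝ (Fin n) × ℝ) : Prop :=
  z₂.1 = z₁.2.2 • z₁.1 - (2 / (1 + ‖z₁.1‖ ^ 2)) • z₁.2.1

/-- The groupoid multiplication of formula (27) on `Z₁ = ℝⁿ × ℝⁿ × ℝ₊`. -/
noncomputable def Zmul {n : ℕ}
    (z₁ z₂ : EuclideanSpace ℝ (Fin n) × EuclideanSpace ℝ (Fin n) × ℝ) :
    EuclideanSpace ℝ (Fin n) × EuclideanSpace ℝ (Fin n) × ℝ :=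
  (z₁.1, z₂.2.2 • z₁.2.1 + ((1 + ‖z₁.1‖ ^ 2) / (1 + ‖z₂.1‖ ^ 2)) • z₂.2.1,
    z₁.2.2 * z₂.2.2)

namespace Zgroupoid

variable {n : ℕ}

local notation "Z" => EuclideanSpace ℝ (Fin n) × EuclideanSpace ℝ (Fin n) × ℝ

noncomputable def rightBase (z : Z) : EuclideanSpace ℝ (Fin n) :=
  z.2.2 • z.1 - (2 / (1 + ‖z.1‖ ^ 2)) • z.2.1

theorem zcomp_iff (z₁ z₂ : Z) : Zcomp z₁ z₂ ↔ z₂.1 = rightBase z₁ := Iff.rfl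

theorem rightBase_zmul {z₁ z₂ : Z} (h : Zcomp z₁ z₂) : rightBase (Zmul z₁ z₂) = rightBase z₂ := by
  rw [zcomp_iff] at h
  have hr : (1 : ℝ) + ‖z₂.1‖ ^ 2 ≠ 0 := by positivity
  simp only [rightBase, Zmul, h]
  match_scalars <;> field_simp

theorem zcomp_zmul_left_iff {z₁ z₂ z₃ : Z} (h : Zcomp z₁ z₂) :
    Zcomp (Zmul z₁ z₂) z₃ ↔ Zcomp z₂ z₃ := by
  rw [zcomp_iff, zcomp_iff, rightBase_zmul h]

theorem zcomp_zmul_right_iff (z₁ z₂ z₃ : Z) : Zcomp z₁ (Zmul z₂ z₃) ↔ Zcomp z₁ z₂ := Iff.rfl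

theorem zmul_assoc (z₁ z₂ z₃ : Z) : Zmul (Zmul z₁ z₂) z₃ = Zmul z₁ (Zmul z₂ z₃) := by
  have hr : (1 : ℝ) + ‖z₂.1‖ ^ 2 ≠ 0 := by positivity
  refine Prod.ext rfl (Prod.ext ?_ (mul_assoc _ _ _))
  simp only [Zmul]
  match_scalars <;> field_simp

end Zgroupoid

open Zgroupoid in
theorem stmt10_general {n : ℕ} (x₁ v₁ x₂ v₂ x₃ v₃ : EuclideanSpace ℝ (Fin n))
    (s₁ s₂ s₃ : ℝ)
    (h12 : Zcomp (x₁, v₁, s₁) (x₂, v₂, s₂))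
    (h23 : Zcomp (x₂, v₂, s₂) (x₃, v₃, s₃)) :
    Zcomp (Zmul (x₁, v₁, s₁) (x₂, v₂, s₂)) (x₃, v₃, s₃) ∧
    Zcomp (x₁, v₁, s₁) (Zmul (x₂, v₂, s₂) (x₃, v₃, s₃)) ∧
    Zmul (Zmul (x₁, v₁, s₁) (x₂, v₂, s₂)) (x₃, v₃, s₃) =
      Zmul (x₁, v₁, s₁) (Zmul (x₂, v₂, s₂) (x₃, v₃, s₃)) :=
  ⟨(zcomp_zmul_left_iff h12).2 h23, (zcomp_zmul_right_iff _ _ _).2 h12, zmul_assoc _ _ _⟩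

/-- The multiplication of formula (27) is associative: if `(x₁,ẋ₁,s₁), (x₂,ẋ₂,s₂)` are
composable and `(x₂,ẋ₂,s₂), (x₃,ẋ₃,s₃)` are composable, then the two possible triple
products are defined and equal. -/
theorem stmt10 {n : ℕ} (x₁ v₁ x₂ v₂ x₃ v₃ : EuclideanSpace ℝ (Fin n))
    (s₁ s₂ s₃ : ℝ) (hs₁ : 0 < s₁) (hs₂ : 0 < s₂) (hs₃ : 0 < s₃)
    (h12 : Zcomp (x₁, v₁, s₁) (x₂, v₂, s₂))
    (h23 : Zcomp (x₂, v₂, s₂) (x₃, v₃, s₃)) :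
    Zcomp (Zmul (x₁, v₁, s₁) (x₂, v₂, s₂)) (x₃, v₃, s₃) ∧
    Zcomp (x₁, v₁, s₁) (Zmul (x₂, v₂, s₂) (x₃, v₃, s₃)) ∧
    Zmul (Zmul (x₁, v₁, s₁) (x₂, v₂, s₂)) (x₃, v₃, s₃) =
      Zmul (x₁, v₁, s₁) (Zmul (x₂, v₂, s₂) (x₃, v₃, s₃)) :=
  stmt10_general x₁ v₁ x₂ v₂ x₃ v₃ s₁ s₂ s₃ h12 h23
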